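/- Claim (III) of Theorem 2.2: Let T be an edge-labeled tableau of shape ν/λ and content μ, and let (x,y) be a position of T carrying at least one label. If a label ℓ of T (at some position) is read by the prefix w_r|_(x,y)(T) but not by the prefix w_c|_(x,y)(T), then ℓ < c for every label c of T at position (x,y). -/

import Mathlib

/-!
Common definitions: partitions, edge-labeled tableaux (Thomas–Yong), reading
words, the polytope conditions (A)–(F), plus diagrams and (factorial) Schur
polynomials, following Adve–Robichaux–Yong,
"Vanishing of Littlewood-Richardson polynomials is in P".
-/

/-- A partition: a weakly decreasing, eventually-zero sequence of natural numbers.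
Internally `toFun` is 0-indexed: `toFun (i-1)` is the `i`-th part `λ_i`. -/
structure SeqPartition where
  toFun : ℕ → ℕ
  antitone' : ∀ ⦃i j : ℕ⦄, i ≤ j → toFun j ≤ toFun i
  eventually_zero' : ∃ N, ∀ i, N ≤ i → toFun i = 0

namespace SeqPartition

/-- The `i`-th part `λ_i` (1-indexed: `part 1` is the first part). -/
def part (p : SeqPartition) (i : ℕ) : ℕ := p.toFun (i - 1)

/-- `ℓ(λ)`: the number of nonzero parts. -/
noncomputable def len (p : SeqPartition) : ℕ := Set.ncard {i : ℕ | p.toFun i ≠ 0}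

/-- `|λ| = Σ_i λ_i`. -/
noncomputable def size (p : SeqPartition) : ℕ := ∑ᶠ i, p.toFun i

/-- The dilated partition `Nλ = (Nλ_1, Nλ_2, …)`. -/
def smul (N : ℕ) (p : SeqPartition) : SeqPartition where
  toFun i := N * p.toFun i
  antitone' _ _ h := Nat.mul_le_mul le_rfl (p.antitone' h)
  eventually_zero' := by
    obtain ⟨M, hM⟩ := p.eventually_zero'
    exact ⟨M, fun i hi => by show N * p.toFun i = 0; rw [hM i hi, Nat.mul_zero]⟩

/-- `λ ⊆ ν`, i.e. `λ_i ≤ ν_i` for all `i`. -/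
def Subset (lam nu : SeqPartition) : Prop := ∀ i, lam.part i ≤ nu.part i

end SeqPartition

/-- `(i,j)` (1-indexed, matrix convention) is a box of the skew shape `ν/λ`,
i.e. `λ_i < j ≤ ν_i`. -/
def IsBox (lam nu : SeqPartition) (i j : ℕ) : Prop :=
  1 ≤ i ∧ lam.part i < j ∧ j ≤ nu.part i

instance (lam nu : SeqPartition) (i j : ℕ) : Decidable (IsBox lam nu i j) :=
  inferInstanceAs (Decidable (_ ∧ _ ∧ _))

/-- `(i+1/2, j)` is a horizontal edge position of the skew shape `ν/λ`:
`1 ≤ j ≤ ν_i` and `j > λ_{i+1}`. -/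
def IsEdge (lam nu : SeqPartition) (i j : ℕ) : Prop :=
  1 ≤ i ∧ 1 ≤ j ∧ j ≤ nu.part i ∧ lam.part (i + 1) < j

/-- An edge-labeled tableau of shape `ν/λ` and content `μ` (Thomas–Yong).
`box i j` is the label of box `(i,j)` (`0` outside the shape), and
`edge i j` is the finite set of labels on the edge `(i+1/2, j)`
(empty outside the shape). All labels are positive integers. -/
structure EdgeTableau (lam mu nu : SeqPartition) where
  subset : SeqPartition.Subset lam nu
  box : ℕ → ℕ → ℕ
  edge : ℕ → ℕ → Finset ℕ
  box_pos : ∀ i j, IsBox lam nu i j → 1 ≤ box i j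
  box_eq_zero : ∀ i j, ¬ IsBox lam nu i j → box i j = 0
  edge_pos : ∀ i j, ∀ e ∈ edge i j, 1 ≤ e
  edge_eq_empty : ∀ i j, ¬ IsEdge lam nu i j → edge i j = ∅
  row_weak : ∀ i j, IsBox lam nu i j → IsBox lam nu i (j+1) → box i j ≤ box i (j+1)
  col_strict : ∀ i j, IsBox lam nu i j → IsBox lam nu (i+1) j → box i j < box (i+1) j
  edge_gt_box : ∀ i j, IsBox lam nu i j → ∀ e ∈ edge i j, box i j < e
  edge_lt_box : ∀ i j, IsBox lam nu (i+1) j → ∀ e ∈ edge i j, e < box (i+1) j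
  not_too_high : ∀ i j, ∀ e ∈ edge i j, e ≤ i
  content : ∀ k, 1 ≤ k →
    Set.ncard {q : ℕ × ℕ | box q.1 q.2 = k} + Set.ncard {q : ℕ × ℕ | k ∈ edge q.1 q.2}
      = mu.part k

namespace EdgeTableau

variable {lam mu nu : SeqPartition}

/-- The (one-letter or empty) word contributed by the box `(i,j)`. -/
def boxWord (T : EdgeTableau lam mu nu) (i j : ℕ) : List ℕ :=
  if IsBox lam nu i j then [T.box i j] else []

/-- The word contributed by the edge `(i+1/2, j)`, read in increasing order. -/
def edgeWord (T : EdgeTableau lam mu nu) (i j : ℕ) : List ℕ :=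
  (T.edge i j).sort (· ≤ ·)

/-- The column reading word `w_c(T)`: columns right to left, each column top to
bottom, alternating the box label of row `i` with the edge set of row `i+1/2`. -/
noncomputable def wc (T : EdgeTableau lam mu nu) : List ℕ :=
  ((List.range (nu.part 1)).reverse).flatMap fun j0 =>
    (List.range nu.len).flatMap fun i0 =>
      T.boxWord (i0+1) (j0+1) ++ T.edgeWord (i0+1) (j0+1)

/-- The row reading word `w_r(T)`: for `i = 1, 2, …`, the boxes of row `i`
right to left, then the edge sets of row `i+1/2` right to left. -/
noncomputable def wr (T : EdgeTableau lam mu nu) : List ℕ :=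
  (List.range nu.len).flatMap fun i0 =>
    (((List.range (nu.part 1)).reverse).flatMap fun j0 => T.boxWord (i0+1) (j0+1)) ++
    (((List.range (nu.part 1)).reverse).flatMap fun j0 => T.edgeWord (i0+1) (j0+1))

end EdgeTableau

/-- A word is lattice if, for every `k ≥ 1`, every prefix contains at least as
many letters `k` as letters `k+1`. -/
def IsLatticeWord (w : List ℕ) : Prop :=
  ∀ k, 1 ≤ k → ∀ t, (w.take t).count (k+1) ≤ (w.take t).count k

/-- `EdgeTab(λ,μ,ν)`: edge-labeled tableaux of shape `ν/λ` and content `μ`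
whose column reading word is lattice. -/
def EdgeTab (lam mu nu : SeqPartition) : Set (EdgeTableau lam mu nu) :=
  {T | IsLatticeWord T.wc}

/-! ### Positions and reading-order prefixes -/

/-- A (horizontal) position of a tableau: a box `(i,j)` or an edge `(i+1/2, j)`. -/
inductive HPos
  | box (i j : ℕ)
  | edge (i j : ℕ)

namespace HPos

/-- Twice the (half-integer) row index: `2i` for a box in row `i`,
`2i+1` for an edge in row `i+1/2`. -/
def rowIdx : HPos → ℕ
  | .box i _ => 2 * i
  | .edge i _ => 2 * i + 1

/-- The column of a position. -/
def col : HPos → ℕ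
  | .box _ j => j
  | .edge _ j => j

/-- `p` is weakly northeast of `q`: weakly above and weakly to the right. -/
def NorthEastOf (p q : HPos) : Prop := p.rowIdx ≤ q.rowIdx ∧ q.col ≤ p.col

/-- `p` is read no later than `q` in the column reading order (columns right to
left, each column top to bottom); equivalently, every label at `p` is read by
the prefix `w_c|_q` of the column reading word ending after position `q`. -/
def colLE (p q : HPos) : Prop := q.col < p.col ∨ (p.col = q.col ∧ p.rowIdx ≤ q.rowIdx)

/-- `p` is read no later than `q` in the row reading order (rows top to bottom,
each row right to left); equivalently, every label at `p` is read by the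
prefix `w_r|_q` of the row reading word ending after position `q`. -/
def rowLE (p q : HPos) : Prop := p.rowIdx < q.rowIdx ∨ (p.rowIdx = q.rowIdx ∧ q.col ≤ p.col)

end HPos

/-- `p` is a valid (box or edge) position of the skew shape `ν/λ`. -/
def IsPos (lam nu : SeqPartition) : HPos → Prop
  | .box i j => IsBox lam nu i j
  | .edge i j => IsEdge lam nu i j

/-- The tableau `T` carries the label `ℓ` at the position `p`. -/
def EdgeTableau.HasLabel {lam mu nu : SeqPartition} (T : EdgeTableau lam mu nu) :
    HPos → ℕ → Prop
  | .box i j, ℓ => IsBox lam nu i j ∧ T.box i j = ℓ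
  | .edge i j, ℓ => ℓ ∈ T.edge i j

/-! ### The statistics `r_k^i(T)`, `r_k^{i+1/2}(T)` and conditions (A)–(F) -/

/-- `r_k^i(T)`: the number of box labels `k` in row `i` of `T`. -/
noncomputable def EdgeTableau.rbox {lam mu nu : SeqPartition} (T : EdgeTableau lam mu nu)
    (k i : ℕ) : ℕ :=
  Set.ncard {j : ℕ | IsBox lam nu i j ∧ T.box i j = k}

/-- `r_k^{i+1/2}(T)`: the number of edge labels `k` on the edges `(i+1/2, j)` of `T`. -/
noncomputable def EdgeTableau.redge {lam mu nu : SeqPartition} (T : EdgeTableau lam mu nu)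
    (k i : ℕ) : ℕ :=
  Set.ncard {j : ℕ | k ∈ T.edge i j}

open Finset in
/-- Conditions (A)–(F) of Adve–Robichaux–Yong for the triple `(λ,μ,ν)` on the real
tuple `(r_k^i, r_k^{i+1/2})_{1 ≤ k ≤ ℓ(μ), 1 ≤ i ≤ ℓ(ν)}`, encoded as a pair of
functions `rb re : ℕ → ℕ → ℝ` (`rb k i = r_k^i`, `re k i = r_k^{i+1/2}`) that
vanish outside the index range (which also encodes the paper's conventions
`r_{ℓ(μ)+1}^i = r_{ℓ(μ)+1}^{i+1/2} = 0` and `r_k^{ℓ(ν)+1} = 0`).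
Membership in the polytope `P(λ,μ,ν)` is exactly this predicate. -/
def SatisfiesAF (lam mu nu : SeqPartition) (rb re : ℕ → ℕ → ℝ) : Prop :=
  -- the tuple is indexed by `1 ≤ k ≤ ℓ(μ)`, `1 ≤ i ≤ ℓ(ν)`; it vanishes elsewhere
  (∀ k i, ¬(1 ≤ k ∧ k ≤ mu.len ∧ 1 ≤ i ∧ i ≤ nu.len) → rb k i = 0 ∧ re k i = 0) ∧
  -- (A) nonnegativity
  (∀ k i, 0 ≤ rb k i ∧ 0 ≤ re k i) ∧
  -- (B) shape constraints
  (∀ i, 1 ≤ i → (lam.part i : ℝ) + ∑ k ∈ Icc 1 mu.len, rb k i = (nu.part i : ℝ)) ∧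
  -- (C) content constraints
  (∀ k, 1 ≤ k → ∑ i ∈ Icc 1 nu.len, (rb k i + re k i) = (mu.part k : ℝ)) ∧
  -- (D) gap constraints
  (∀ k i, 1 ≤ k → k ≤ mu.len → 1 ≤ i → i ≤ nu.len →
    re k i ≤ ((lam.part i : ℝ) + ∑ k' ∈ Ico 1 k, rb k' i)
      - ((lam.part (i+1) : ℝ) + ∑ k' ∈ Icc 1 k, rb k' (i+1))) ∧
  -- (E) no label is too high
  (∀ k i, i < k → rb k i = 0 ∧ re k i = 0) ∧
  -- (F) reverse lattice word constraints
  (∀ k i, 1 ≤ k → k ≤ mu.len → 1 ≤ i → i ≤ nu.len →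
    rb (k+1) i + ∑ i' ∈ Ico 1 i, (rb (k+1) i' + re (k+1) i')
      ≤ ∑ i' ∈ Ico 1 i, (rb k i' + re k i'))

/-! ### Plus diagrams and (factorial) Schur polynomials -/

/-- The initial diagram of `λ` in the `n`-row grid: a `+` in each position
`(i,j)` with `1 ≤ i ≤ n`, `1 ≤ j ≤ λ_i`. -/
def initialDiagram (n : ℕ) (lam : SeqPartition) : Finset (ℕ × ℕ) :=
  (Finset.Icc 1 n ×ˢ Finset.Icc 1 (lam.part 1)).filter fun q => q.2 ≤ lam.part q.1

/-- A local move in the `n × m` grid: a `+` at `(i,j)` moves to `(i+1,j+1)`,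
provided `(i+1,j+1)` lies in the grid and `(i,j+1)`, `(i+1,j)`, `(i+1,j+1)`
carry no `+`. -/
def IsLocalMove (n m : ℕ) (P Q : Finset (ℕ × ℕ)) : Prop :=
  ∃ i j, (i, j) ∈ P ∧ i + 1 ≤ n ∧ j + 1 ≤ m ∧
    (i, j+1) ∉ P ∧ (i+1, j) ∉ P ∧ (i+1, j+1) ∉ P ∧
    Q = insert (i+1, j+1) (P.erase (i, j))

/-- `Plus(λ)`: all configurations obtainable from the initial diagram of `λ`
in the `n × m` grid by finite sequences of local moves. -/
def PlusSet (n m : ℕ) (lam : SeqPartition) : Set (Finset (ℕ × ℕ)) :=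
  {P | Relation.ReflTransGen (IsLocalMove n m) (initialDiagram n lam) P}

open MvPolynomial in
/-- `wt_{x,y}(P) = ∏_{(i,j) ∈ P} (x_i - y_j)`, in `ℤ[x_1, x_2, …, y_1, y_2, …]`
(the variable `Sum.inl i` is `x_i`, and `Sum.inr j` is `y_j`). -/
noncomputable def wtxy (P : Finset (ℕ × ℕ)) : MvPolynomial (ℕ ⊕ ℕ) ℤ :=
  ∏ q ∈ P, (X (Sum.inl q.1) - X (Sum.inr q.2))

open MvPolynomial in
/-- `wt_x(P) = ∏_i x_i^{a_i(P)}`, where `a_i(P)` is the number of `+`'s in row `i`. -/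
noncomputable def wtx (P : Finset (ℕ × ℕ)) : MvPolynomial (ℕ ⊕ ℕ) ℤ :=
  ∏ q ∈ P, X (Sum.inl q.1)

/-- The factorial Schur polynomial `s_λ(X;Y) = Σ_{P ∈ Plus(λ)} wt_{x,y}(P)`
(computed in the `n × m` grid). -/
noncomputable def factorialSchur (n m : ℕ) (lam : SeqPartition) : MvPolynomial (ℕ ⊕ ℕ) ℤ :=
  ∑ᶠ P ∈ PlusSet n m lam, wtxy P

/-- The Schur polynomial `s_λ(X) = Σ_{P ∈ Plus(λ)} wt_x(P)`
(computed in the `n × m` grid). -/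
noncomputable def schurPoly (n m : ℕ) (lam : SeqPartition) : MvPolynomial (ℕ ⊕ ℕ) ℤ :=
  ∑ᶠ P ∈ PlusSet n m lam, wtx P

open MvPolynomial in
/-- The substitution `y_j = 0` for all `j` (keeping the `x`-variables). -/
noncomputable def setYtoZero : MvPolynomial (ℕ ⊕ ℕ) ℤ →+* MvPolynomial (ℕ ⊕ ℕ) ℤ :=
  (aeval (Sum.elim (fun i => (X (Sum.inl i) : MvPolynomial (ℕ ⊕ ℕ) ℤ)) fun _ => 0)).toRingHom

open MvPolynomial in
/-- Interpret a polynomial in `ℤ[y_1, y_2, …]` inside `ℤ[x_1, …, y_1, …]`. -/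
noncomputable def yPoly (p : MvPolynomial ℕ ℤ) : MvPolynomial (ℕ ⊕ ℕ) ℤ :=
  rename Sum.inr p

section ClaimIIIAux

lemma SeqPartition.part_anti (p : SeqPartition) {i j : ℕ} (h : i ≤ j) : p.part j ≤ p.part i :=
  p.antitone' (Nat.sub_le_sub_right h 1)

variable {lam mu nu : SeqPartition} (T : EdgeTableau lam mu nu)

/-- Boxes in a column between two boxes are boxes. -/
lemma isBox_between' {i i' k j : ℕ} (h1 : IsBox lam nu i j) (h2 : IsBox lam nu i' j)
    (hik : i ≤ k) (hki : k ≤ i') : IsBox lam nu k j :=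
  ⟨le_trans h1.1 hik, lt_of_le_of_lt (lam.part_anti hik) h1.2.1,
    le_trans h2.2.2 (nu.part_anti hki)⟩

/-- Column monotonicity along a column of boxes. -/
lemma col_mono {i i' j : ℕ} (h1 : IsBox lam nu i j) (h2 : IsBox lam nu i' j)
    (hii : i ≤ i') : T.box i j ≤ T.box i' j := by
  induction i' , hii using Nat.le_induction with
  | base => rfl
  | succ n hn ih =>
    have hb : IsBox lam nu n j := isBox_between' h1 h2 hn (Nat.le_succ n)
    exact le_trans (ih hb) (le_of_lt (T.col_strict n j hb h2))

/-- Strict column monotonicity. -/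
lemma col_strict_mono {i i' j : ℕ} (h1 : IsBox lam nu i j) (h2 : IsBox lam nu i' j)
    (hii : i < i') : T.box i j < T.box i' j := by
  have hb : IsBox lam nu (i + 1) j := isBox_between' h1 h2 (Nat.le_succ i) hii
  exact lt_of_lt_of_le (T.col_strict i j h1 hb) (col_mono T hb h2 hii)

lemma isBox_between_row {i j j' k : ℕ} (h1 : IsBox lam nu i j) (h2 : IsBox lam nu i j')
    (hjk : j ≤ k) (hkj : k ≤ j') : IsBox lam nu i k :=
  ⟨h1.1, lt_of_lt_of_le h1.2.1 hjk, le_trans hkj h2.2.2⟩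

/-- Row weak monotonicity along a row of boxes. -/
lemma row_mono {i j j' : ℕ} (h1 : IsBox lam nu i j) (h2 : IsBox lam nu i j')
    (hjj : j ≤ j') : T.box i j ≤ T.box i j' := by
  induction j' , hjj using Nat.le_induction with
  | base => rfl
  | succ n hn ih =>
    have hb : IsBox lam nu i n := isBox_between_row h1 h2 hn (Nat.le_succ n)
    exact le_trans (ih hb) (T.row_weak i n hb h2)

/-- Northwest box ≤ southeast box, strict if strictly lower row. -/
lemma nw_lt {i i' j j' : ℕ} (h1 : IsBox lam nu i j) (h2 : IsBox lam nu i' j')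
    (hii : i < i') (hjj : j ≤ j') : T.box i j < T.box i' j' := by
  have hb : IsBox lam nu i' j :=
    ⟨le_trans h1.1 (le_of_lt hii), lt_of_le_of_lt (lam.part_anti (le_of_lt hii)) h1.2.1,
      le_trans hjj h2.2.2⟩
  exact lt_of_lt_of_le (col_strict_mono T h1 hb hii) (row_mono T hb h2 hjj)

lemma nw_le {i i' j j' : ℕ} (h1 : IsBox lam nu i j) (h2 : IsBox lam nu i' j')
    (hii : i ≤ i') (hjj : j ≤ j') : T.box i j ≤ T.box i' j' := by
  have hb : IsBox lam nu i' j :=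
    ⟨le_trans h1.1 hii, lt_of_le_of_lt (lam.part_anti hii) h1.2.1, le_trans hjj h2.2.2⟩
  exact le_trans (col_mono T h1 hb hii) (row_mono T hb h2 hjj)

lemma isEdge_of_mem {i j e : ℕ} (h : e ∈ T.edge i j) : IsEdge lam nu i j := by
  by_contra hne
  rw [T.edge_eq_empty i j hne] at h
  exact absurd h (Finset.notMem_empty e)

end ClaimIIIAux

/-- **Claim (III) of Theorem 2.2.** If a label `ℓ` of `T` at a position `q` is
read by the prefix `w_r|_p(T)` but not by the prefix `w_c|_p(T)` (i.e. `q` is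
read no later than `p` in row order, but not in column order), then `ℓ < c`
for every label `c` of `T` at the position `p`. -/
theorem claim_III (lam mu nu : SeqPartition) (T : EdgeTableau lam mu nu)
    (p : HPos) (hp : ∃ c, T.HasLabel p c)
    (q : HPos) (ℓ : ℕ) (hq : T.HasLabel q ℓ)
    (hr : q.rowLE p) (hc : ¬ q.colLE p) :
    ∀ c, T.HasLabel p c → ℓ < c := by
  -- Extract: q.rowIdx < p.rowIdx and q.col < p.col
  unfold HPos.colLE at hc
  unfold HPos.rowLE at hr
  push_neg at hc
  obtain ⟨hc1, hc2⟩ := hc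
  have hrow : q.rowIdx < p.rowIdx := by
    rcases lt_or_eq_of_le hc1 with h | h
    · rcases hr with hr | hr
      · exact hr
      · omega
    · have := hc2 h
      rcases hr with hr | hr <;> omega
  have hcol' : q.col < p.col := by
    rcases lt_or_eq_of_le hc1 with h | h
    · exact h
    · have := hc2 h
      omega
  clear hr hp hc1 hc2
  intro c hcp
  -- case analysis on q and p
  cases q with
  | box i j =>
    obtain ⟨hbq, hval⟩ := hq
    cases p with
    | box i' j' =>
      obtain ⟨hbp, hvalp⟩ := hcp
      simp only [HPos.rowIdx, HPos.col] at hrow hcol'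
      have hii : i < i' := by omega
      rw [← hval, ← hvalp]
      exact nw_lt T hbq hbp hii (le_of_lt hcol')
    | edge i' j' =>
      simp only [HPos.rowIdx, HPos.col] at hrow hcol'
      have hii : i ≤ i' := by omega
      have he : IsEdge lam nu i' j' := isEdge_of_mem T hcp
      have hbp : IsBox lam nu i' j' := by
        refine ⟨he.1, ?_, he.2.2.1⟩
        by_contra hgt
        push_neg at hgt
        have : lam.part i' ≤ lam.part i := lam.part_anti hii
        have := hbq.2.1
        omega
      have h1 : T.box i j ≤ T.box i' j' := nw_le T hbq hbp hii (le_of_lt hcol')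
      have h2 : T.box i' j' < c := T.edge_gt_box i' j' hbp c hcp
      omega
  | edge i j =>
    have heq : IsEdge lam nu i j := isEdge_of_mem T hq
    cases p with
    | box i' j' =>
      obtain ⟨hbp, hvalp⟩ := hcp
      simp only [HPos.rowIdx, HPos.col] at hrow hcol'
      have hii : i + 1 ≤ i' := by omega
      have hb1 : IsBox lam nu (i+1) j :=
        ⟨Nat.le_add_left 1 i, heq.2.2.2,
          le_trans (le_of_lt hcol') (le_trans hbp.2.2 (nu.part_anti hii))⟩
      have h1 : ℓ < T.box (i+1) j := T.edge_lt_box i j hb1 ℓ hq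
      have h2 : T.box (i+1) j ≤ T.box i' j' := nw_le T hb1 hbp hii (le_of_lt hcol')
      omega
    | edge i' j' =>
      simp only [HPos.rowIdx, HPos.col] at hrow hcol'
      have hii : i + 1 ≤ i' := by omega
      have he : IsEdge lam nu i' j' := isEdge_of_mem T hcp
      have hbp : IsBox lam nu i' j' := by
        refine ⟨he.1, ?_, he.2.2.1⟩
        by_contra hgt
        push_neg at hgt
        have : lam.part i' ≤ lam.part (i+1) := lam.part_anti hii
        have := heq.2.2.2
        omega
      have hb1 : IsBox lam nu (i+1) j :=
        ⟨Nat.le_add_left 1 i, heq.2.2.2,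
          le_trans (le_of_lt hcol') (le_trans hbp.2.2 (nu.part_anti hii))⟩
      have h1 : ℓ < T.box (i+1) j := T.edge_lt_box i j hb1 ℓ hq
      have h2 : T.box (i+1) j ≤ T.box i' j' := nw_le T hb1 hbp hii (le_of_lt hcol')
      have h3 : T.box i' j' < c := T.edge_gt_box i' j' hbp c hcp
      omega
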